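/- arXiv:2108.05434 — 5 statements merged into one kernel-verified Lean document; each statement's English description precedes it below -/
import Mathlib

section
/- Let A be a finite alphabet and let x : ℕ → A be an infinite word whose factor complexity is linear, i.e., there is a constant c such that for every n ≥ 1 the number of distinct length-n factors of x is at most c·n. Then x is discrete: the set of primitive finite words that occur with unbounded exponent in x is finite. -/
/-- The factor of the infinite word `x` of length `n` starting at position `i`. -/
def factorAt {A : Type*} (x : ℕ → A) (i n : ℕ) : List A :=
  (List.range n).map fun j => x (i + j)

/-- `w` is a factor of the infinite word `x`. -/
def IsFactor {A : Type*} (x : ℕ → A) (w : List A) : Prop :=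
  ∃ i : ℕ, w = factorAt x i w.length

/-- The `n`-th power of the finite word `w`. -/
def wpow {A : Type*} (w : List A) (n : ℕ) : List A :=
  (List.replicate n w).flatten

/-- A nonempty finite word is primitive if it is not a proper power. -/
def Primitive {A : Type*} (w : List A) : Prop :=
  w ≠ [] ∧ ∀ (t : List A) (e : ℕ), 2 ≤ e → w ≠ wpow t e

/-- `w` occurs with unbounded exponent in the infinite word `x`. -/
def UnboundedExponent {A : Type*} (x : ℕ → A) (w : List A) : Prop :=
  ∀ n : ℕ, 1 ≤ n → IsFactor x (wpow w n)

/-- `w` belongs to `{a,b}^*`, the submonoid generated by `a` and `b`. -/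
def InStarPair {A : Type*} (a b w : List A) : Prop :=
  ∃ l : List (List A), (∀ t ∈ l, t = a ∨ t = b) ∧ w = l.flatten

/-- `(u, v)` is a minimal pair: there is no pair `(a, b)` of smaller total length
with `u, v ∈ {a,b}^*`. -/
def MinimalPair {A : Type*} (u v : List A) : Prop :=
  ¬ ∃ a b : List A, a.length + b.length < u.length + v.length ∧
      InStarPair a b u ∧ InStarPair a b v

/-- The finite word `w` is a prefix of the infinite word `x`. -/
def WordPrefix {A : Type*} (x : ℕ → A) (w : List A) : Prop :=
  w = factorAt x 0 w.length

/-- The infinite word `x` belongs to `{u,v}^ω`, i.e. `x` is an infinite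
concatenation of blocks, each equal to `u` or to `v`. -/
def InOmegaPair {A : Type*} (x : ℕ → A) (u v : List A) : Prop :=
  ∃ f : ℕ → List A, (∀ n, f n = u ∨ f n = v) ∧
    ∀ n : ℕ, WordPrefix x (((List.range n).map f).flatten)

/-- The morphism `{x,y}^* → Σ^*` sending `x` (encoded `false`) to `u` and
`y` (encoded `true`) to `v`. -/
def sigmaMap {A : Type*} (u v : List A) (w : List Bool) : List A :=
  (w.map fun c => if c then v else u).flatten

/-- The number of occurrences of the factor `xy` (encoded `[false, true]`) in `w`. -/
def countXY (w : List Bool) : ℕ :=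
  ((List.range w.length).filter fun i => decide ([false, true] <+: w.drop i)).length


section Discreteness

variable {A : Type*}

/-! ### Basic lemmas about `factorAt` and `wpow` -/

/-- `x` has period `n` on the window `[s, E)`. -/
def Per (x : ℕ → A) (s E n : ℕ) : Prop :=
  ∀ j, s ≤ j → j + n < E → x j = x (j + n)

@[simp] lemma factorAt_length (x : ℕ → A) (i n : ℕ) : (factorAt x i n).length = n := by
  simp [factorAt]

lemma factorAt_getElem (x : ℕ → A) (i n j : ℕ) (h : j < (factorAt x i n).length) :
    (factorAt x i n)[j] = x (i + j) := by
  simp [factorAt]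

lemma factorAt_append (x : ℕ → A) (i a b : ℕ) :
    factorAt x i (a + b) = factorAt x i a ++ factorAt x (i + a) b := by
  apply List.ext_getElem
  · simp
  · intro j h1 h2
    simp only [factorAt_length, List.length_append] at h1 h2
    rcases lt_or_ge j a with hj | hj
    · rw [factorAt_getElem, List.getElem_append_left (by simpa using hj), factorAt_getElem]
    · rw [factorAt_getElem, List.getElem_append_right (by simpa using hj)]
      rw [factorAt_getElem]
      congr 1
      simp only [factorAt_length]
      omega

lemma factorAt_eq_pointwise {x : ℕ → A} {i j M : ℕ}
    (h : factorAt x i M = factorAt x j M) : ∀ t, t < M → x (i + t) = x (j + t) := by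
  intro t ht
  have h1 : (factorAt x i M)[t]'(by simpa using ht) = (factorAt x j M)[t]'(by simpa using ht) :=
    List.getElem_of_eq h _
  rwa [factorAt_getElem, factorAt_getElem] at h1

lemma pointwise_eq_factorAt {x : ℕ → A} {i j M : ℕ}
    (h : ∀ t, t < M → x (i + t) = x (j + t)) : factorAt x i M = factorAt x j M := by
  apply List.ext_getElem (by simp)
  intro t h1 h2
  rw [factorAt_getElem, factorAt_getElem]
  exact h t (by simpa using h1)

lemma wpow_succ (w : List A) (k : ℕ) : wpow w (k+1) = w ++ wpow w k := by
  simp [wpow, List.replicate_succ]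

lemma wpow_succ' (w : List A) (k : ℕ) : wpow w (k+1) = wpow w k ++ w := by
  simp [wpow, List.replicate_succ', List.flatten_append]

@[simp] lemma wpow_length (w : List A) (k : ℕ) : (wpow w k).length = k * w.length := by
  induction k with
  | zero => simp [wpow]
  | succ k ih => rw [wpow_succ, List.length_append, ih]; ring

lemma occ_head {x : ℕ → A} {w : List A} {p k : ℕ}
    (h : wpow w (k+1) = factorAt x p ((k+1) * w.length)) : w = factorAt x p w.length := by
  have hsplit : factorAt x p ((k+1) * w.length)
      = factorAt x p w.length ++ factorAt x (p + w.length) (k * w.length) := by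
    rw [show (k+1) * w.length = w.length + k * w.length by ring, factorAt_append]
  rw [wpow_succ, hsplit] at h
  exact (List.append_inj h (by simp)).1

lemma occ_per {x : ℕ → A} {w : List A} {p k : ℕ}
    (h : wpow w (k+1) = factorAt x p ((k+1) * w.length)) :
    Per x p (p + (k+1) * w.length) w.length := by
  have hsplit : factorAt x p ((k+1) * w.length)
      = factorAt x p (k * w.length) ++ factorAt x (p + k * w.length) w.length := by
    rw [show (k+1) * w.length = k * w.length + w.length by ring, factorAt_append]
  have h1 : wpow w k = factorAt x p (k * w.length) := by
    rw [wpow_succ', hsplit] at h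
    exact (List.append_inj h (by simp)).1
  have hsplit2 : factorAt x p ((k+1) * w.length)
      = factorAt x p w.length ++ factorAt x (p + w.length) (k * w.length) := by
    rw [show (k+1) * w.length = w.length + k * w.length by ring, factorAt_append]
  have h2 : wpow w k = factorAt x (p + w.length) (k * w.length) := by
    rw [wpow_succ, hsplit2] at h
    exact (List.append_inj h (by simp)).2
  have h3 := factorAt_eq_pointwise (h1.symm.trans h2)
  intro j hj hjE
  have hkk : (k+1) * w.length = k * w.length + w.length := by ring
  have := h3 (j - p) (by omega)
  have e1 : p + (j - p) = j := by omega
  have e2 : p + w.length + (j - p) = j + w.length := by omega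
  rw [e1, e2] at this
  exact this

lemma per_mono {x : ℕ → A} {s E E' n : ℕ} (h : Per x s E n) (hE : E' ≤ E) : Per x s E' n :=
  fun j hj hjE => h j hj (by omega)

lemma per_shift {x : ℕ → A} {s E n : ℕ} (hper : Per x s E n) :
    ∀ a i, s ≤ i → i + a * n < E → x i = x (i + a * n) := by
  intro a
  induction a with
  | zero => simp
  | succ a ih =>
    intro i hi hE
    have hs : (a+1) * n = a * n + n := by ring
    have h1 : x i = x (i + a * n) := ih i hi (by omega)
    rw [h1]
    have := hper (i + a * n) (by omega) (by omega)
    rw [this]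
    congr 1
    omega

/-! ### Fine and Wilf -/

lemma fine_wilf (x : ℕ → A) :
    ∀ M p q s, 1 ≤ p → 1 ≤ q → p + q ≤ M → Per x s (s + M) p → Per x s (s + M) q →
      Per x s (s + M) (Nat.gcd p q) := by
  intro M
  induction M using Nat.strong_induction_on with
  | _ M ih =>
    intro p q s hp hq hpq hPp hPq
    rcases lt_trichotomy p q with hlt | heq | hgt
    · obtain ⟨r, rfl⟩ : ∃ r, q = p + r := ⟨q - p, by omega⟩
      have hr : 1 ≤ r := by omega
      have hg : Nat.gcd p (p + r) = Nat.gcd p r := by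
        rw [Nat.gcd_comm, Nat.add_comm p r, Nat.gcd_add_self_left, Nat.gcd_comm]
      have hPr : Per x s (s + (M - p)) r := by
        intro j hj hjE
        have e1 : x j = x (j + (p + r)) := hPq j hj (by omega)
        have e2 : x (j + r) = x (j + r + p) := hPp (j + r) (by omega) (by omega)
        rw [e1, e2]; congr 1; omega
      have hPp' : Per x s (s + (M - p)) p := per_mono hPp (by omega)
      have hIH : Per x s (s + (M - p)) (Nat.gcd p r) :=
        ih (M - p) (by omega) p r s hp hr (by omega) hPp' hPr
      rw [hg]
      set g := Nat.gcd p r with hgdef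
      have hg1 : 1 ≤ g := Nat.pos_of_ne_zero (by
        intro h0; rw [hgdef] at h0; exact absurd (Nat.eq_zero_of_gcd_eq_zero_left h0) (by omega))
      have hqpg : p + g ≤ p + r := by
        have : g ∣ r := Nat.gcd_dvd_right _ _
        have := Nat.le_of_dvd (by omega) this
        omega
      intro j hj hjE
      by_cases hcase : j + g < s + (M - p)
      · exact hIH j hj hcase
      · have hjs : s + p ≤ j := by omega
        have e1 : x (j - p) = x j := by
          have := hPp (j - p) (by omega) (by omega)
          rw [this]; congr 1; omega
        have e2 : x (j - p) = x (j - p + g) := hIH (j - p) (by omega) (by omega)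
        have e3 : x (j - p + g) = x (j + g) := by
          have := hPp (j - p + g) (by omega) (by omega)
          rw [this]; congr 1; omega
        rw [← e1, e2, e3]
    · subst heq
      rwa [Nat.gcd_self]
    · obtain ⟨r, rfl⟩ : ∃ r, p = q + r := ⟨p - q, by omega⟩
      have hr : 1 ≤ r := by omega
      have hg : Nat.gcd (q + r) q = Nat.gcd r q := by
        rw [Nat.add_comm q r, Nat.gcd_add_self_left]
      have hPr : Per x s (s + (M - q)) r := by
        intro j hj hjE
        have e1 : x j = x (j + (q + r)) := hPp j hj (by omega)
        have e2 : x (j + r) = x (j + r + q) := hPq (j + r) (by omega) (by omega)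
        rw [e1, e2]; congr 1; omega
      have hPq' : Per x s (s + (M - q)) q := per_mono hPq (by omega)
      have hIH : Per x s (s + (M - q)) (Nat.gcd r q) :=
        ih (M - q) (by omega) r q s hr hq (by omega) hPr hPq'
      rw [hg]
      set g := Nat.gcd r q with hgdef
      have hg1 : 1 ≤ g := Nat.pos_of_ne_zero (by
        intro h0; rw [hgdef] at h0; exact absurd (Nat.eq_zero_of_gcd_eq_zero_right h0) (by omega))
      have hqpg : q + g ≤ q + r := by
        have : g ∣ r := Nat.gcd_dvd_left _ _
        have := Nat.le_of_dvd (by omega) this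
        omega
      intro j hj hjE
      by_cases hcase : j + g < s + (M - q)
      · exact hIH j hj hcase
      · have hjs : s + q ≤ j := by omega
        have e1 : x (j - q) = x j := by
          have := hPq (j - q) (by omega) (by omega)
          rw [this]; congr 1; omega
        have e2 : x (j - q) = x (j - q + g) := hIH (j - q) (by omega) (by omega)
        have e3 : x (j - q + g) = x (j + g) := by
          have := hPq (j - q + g) (by omega) (by omega)
          rw [this]; congr 1; omega
        rw [← e1, e2, e3]

/-! ### Periods and primitivity -/

lemma per_pow {x : ℕ → A} {s g : ℕ} :
    ∀ e, Per x s (s + g * e) g → factorAt x s (g * e) = wpow (factorAt x s g) e := by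
  intro e
  induction e with
  | zero => intro _; simp [wpow, factorAt, List.range_zero]
  | succ e ih =>
    intro hper
    have hs : g * (e + 1) = g + g * e := by ring
    rw [hs, factorAt_append x s g (g * e)]
    have h2 : factorAt x (s + g) (g * e) = factorAt x s (g * e) := by
      apply (pointwise_eq_factorAt _).symm
      intro t ht
      have := hper (s + t) (by omega) (by omega)
      rw [this]; congr 1; omega
    rw [h2, ih (fun j hj hjE => hper j hj (by omega)), wpow_succ]

lemma prim_no_small_period {x : ℕ → A} {w : List A} {p g : ℕ}
    (hw : w = factorAt x p w.length) (hprim : Primitive w)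
    (hper : Per x p (p + w.length) g) (hdvd : g ∣ w.length) (h1 : 1 ≤ g)
    (hlt : g < w.length) : False := by
  obtain ⟨e, he⟩ := hdvd
  have he2 : 2 ≤ e := by
    rcases e with _ | _ | e
    · omega
    · omega
    · omega
  have := per_pow e (by rw [← he]; exact hper)
  rw [← he] at this
  exact hprim.2 (factorAt x p g) e he2 (hw.trans this)

/-! ### Finiteness of factor sets -/

lemma finite_length_eq [Finite A] (n : ℕ) : {l : List A | l.length = n}.Finite := by
  have : {l : List A | l.length = n} ⊆ Set.range (List.ofFn : (Fin n → A) → List A) := by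
    intro l hl
    simp only [Set.mem_setOf_eq] at hl
    subst hl
    exact ⟨l.get, List.ofFn_get l⟩
  exact (Set.finite_range _).subset this

lemma finite_length_le [Finite A] (B : ℕ) : {l : List A | l.length ≤ B}.Finite := by
  have : {l : List A | l.length ≤ B} ⊆ ⋃ n ∈ Set.Iic B, {l : List A | l.length = n} := by
    intro l hl; simp only [Set.mem_setOf_eq] at hl
    exact Set.mem_biUnion hl rfl
  exact ((Set.finite_Iic B).biUnion fun n _ => finite_length_eq n).subset this

/-- The set of factors of `x` of length `n`. -/
def Fset (x : ℕ → A) (n : ℕ) : Set (List A) := {w | w.length = n ∧ IsFactor x w}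

lemma Fset_finite [Finite A] (x : ℕ → A) (n : ℕ) : (Fset x n).Finite :=
  (finite_length_eq n).subset fun _ hw => hw.1

lemma factorAt_mem_Fset (x : ℕ → A) (i n : ℕ) : factorAt x i n ∈ Fset x n :=
  ⟨factorAt_length x i n, ⟨i, by rw [factorAt_length]⟩⟩

lemma factorAt_succ (x : ℕ → A) (i L : ℕ) :
    factorAt x i (L + 1) = factorAt x i L ++ [x (i + L)] := by
  simp [factorAt, List.range_succ]

/-! ### Counting: right special factors increase complexity -/

lemma count_step [Finite A] (x : ℕ → A) (L k : ℕ) (u : Fin k → List A) (a b : Fin k → A)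
    (huinj : Function.Injective u)
    (hu : ∀ i, u i ∈ Fset x L)
    (hab : ∀ i, a i ≠ b i)
    (ha : ∀ i, u i ++ [a i] ∈ Fset x (L + 1))
    (hb : ∀ i, u i ++ [b i] ∈ Fset x (L + 1)) :
    (Fset x L).ncard + k ≤ (Fset x (L + 1)).ncard := by
  classical
  set f : List A → List A := fun v =>
    if h : IsFactor x v then v ++ [x (h.choose + v.length)] else v with hf
  have hfv : ∀ v ∈ Fset x L, f v ∈ Fset x (L+1) ∧ ∃ cletter, f v = v ++ [cletter] := by
    intro v hv
    obtain ⟨hlen, hfac⟩ := hv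
    rw [hf]
    simp only [dif_pos hfac]
    refine ⟨?_, ⟨_, rfl⟩⟩
    have key : ∀ q : ℕ, v = factorAt x q v.length → v ++ [x (q + v.length)] ∈ Fset x (L + 1) := by
      intro q hq
      have h2 : v ++ [x (q + v.length)] = factorAt x q (v.length + 1) := by
        rw [factorAt_succ, ← hq]
      rw [h2, hlen]
      exact factorAt_mem_Fset x _ _
    exact key hfac.choose hfac.choose_spec
  have hdrop : ∀ v ∈ Fset x L, (f v).dropLast = v := by
    intro v hv
    obtain ⟨_, c, hc⟩ := hfv v hv
    rw [hc, List.dropLast_concat]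
  set g : Fin k → List A := fun i =>
    if f (u i) = u i ++ [a i] then u i ++ [b i] else u i ++ [a i] with hg
  have hgmem : ∀ i, g i ∈ Fset x (L+1) := by
    intro i; rw [hg]; dsimp only
    split
    · exact hb i
    · exact ha i
  have hgdrop : ∀ i, (g i).dropLast = u i := by
    intro i; rw [hg]; dsimp only
    split <;> rw [List.dropLast_concat]
  have hgne : ∀ i, g i ≠ f (u i) := by
    intro i; rw [hg]; dsimp only
    split
    · rename_i h
      rw [h]
      intro hcon
      exact hab i (by simpa using (List.append_inj hcon rfl).2.symm)
    · rename_i h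
      exact fun hcon => h hcon.symm
  have hsub : (f '' Fset x L) ∪ (Set.range g) ⊆ Fset x (L+1) := by
    rintro y (⟨v, hv, rfl⟩ | ⟨i, rfl⟩)
    · exact (hfv v hv).1
    · exact hgmem i
  have hdisj : Disjoint (f '' Fset x L) (Set.range g) := by
    rw [Set.disjoint_left]
    rintro y ⟨v, hv, rfl⟩ ⟨i, hi⟩
    have hvu : v = u i := by
      have h1 := hdrop v hv
      have h2 := hgdrop i
      rw [hi] at h2
      rw [← h1, h2]
    rw [hvu] at hi
    exact hgne i hi
  have hcard1 : (f '' Fset x L).ncard = (Fset x L).ncard := by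
    apply Set.ncard_image_of_injOn
    intro v1 h1 v2 h2 he
    rw [← hdrop v1 h1, ← hdrop v2 h2, he]
  have hcard2 : (Set.range g).ncard = k := by
    have hginj : Function.Injective g := by
      intro i j hij
      apply huinj
      rw [← hgdrop i, ← hgdrop j, hij]
    rw [← Set.image_univ, Set.ncard_image_of_injOn hginj.injOn, Set.ncard_univ]
    simp
  calc (Fset x L).ncard + k = ((f '' Fset x L) ∪ Set.range g).ncard := by
        rw [Set.ncard_union_eq hdisj ((Fset_finite x L).image f) (Set.finite_range g),
          hcard1, hcard2]
      _ ≤ (Fset x (L+1)).ncard := Set.ncard_le_ncard hsub (Fset_finite x (L+1))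

/-! ### Construction of right special factors -/

lemma exists_multiple_in (n : ℕ) (hn : 1 ≤ n) : ∀ d, ∃ a, d ≤ a * n ∧ a * n < d + n := by
  intro d
  induction d with
  | zero => exact ⟨0, by omega, by omega⟩
  | succ d ih =>
    obtain ⟨a, h1, h2⟩ := ih
    rcases Nat.lt_or_ge d (a * n) with h | h
    · exact ⟨a, by omega, by omega⟩
    · have hd : a * n = d := by omega
      exact ⟨a + 1, by rw [add_mul]; omega, by rw [add_mul]; omega⟩

lemma prim_length_pos {w : List A} (h : Primitive w) : 1 ≤ w.length :=
  List.length_pos_iff.mpr h.1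

lemma occ_of_ub {x : ℕ → A} {w : List A} (hub : UnboundedExponent x w) (k : ℕ) (hk : 1 ≤ k) :
    ∃ p, wpow w k = factorAt x p (k * w.length) := by
  obtain ⟨p, hp⟩ := hub k hk
  exact ⟨p, by rwa [wpow_length] at hp⟩

/-- Eventually periodic case: any primitive word with unbounded exponent has length
at most the period. -/
lemma length_le_period {x : ℕ → A} {q N : ℕ} (hq : 1 ≤ q)
    (hN : ∀ i, N ≤ i → x (i + q) = x i) {w : List A}
    (hprim : Primitive w) (hub : UnboundedExponent x w) : w.length ≤ q := by
  set n := w.length with hndef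
  have hn : 1 ≤ n := prim_length_pos hprim
  set k' : ℕ := N + 2 * q + 3 * n with hk'def
  obtain ⟨p, hocc⟩ := occ_of_ub hub (k' + 1) (by omega)
  have Per1 : Per x p (p + (k' + 1) * n) n := occ_per hocc
  have hw0 : w = factorAt x p n := occ_head hocc
  set E := p + (k' + 1) * n with hEdef
  set s₀ := max p N with hs₀def
  have hkn : k' + 1 ≤ (k' + 1) * n := Nat.le_mul_of_pos_right _ (by omega)
  have hE : s₀ + (2 * q + 3 * n) ≤ E := by
    rcases max_cases p N with ⟨h1, h2⟩ | ⟨h1, h2⟩ <;> omega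
  have hPn : Per x s₀ E n := fun j hj hjE => Per1 j (le_trans (le_max_left _ _) hj) hjE
  have hPq : Per x s₀ E q := by
    intro j hj hjE
    exact (hN j (le_trans (le_max_right _ _) hj)).symm
  have hEM : s₀ + (E - s₀) = E := by omega
  have hPerg : Per x s₀ E (Nat.gcd n q) := by
    have := fine_wilf x (E - s₀) n q s₀ hn hq (by omega) (by rwa [hEM]) (by rwa [hEM])
    rwa [hEM] at this
  set g := Nat.gcd n q with hgdef
  have hg1 : 1 ≤ g := Nat.pos_of_ne_zero (by
    intro h0; rw [hgdef] at h0; exact absurd (Nat.eq_zero_of_gcd_eq_zero_left h0) (by omega))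
  have hgn : g ∣ n := Nat.gcd_dvd_left _ _
  have hgq : g ∣ q := Nat.gcd_dvd_right _ _
  have hgle : g ≤ n := Nat.le_of_dvd (by omega) hgn
  obtain ⟨a, ha1, ha2⟩ := exists_multiple_in n hn (s₀ - p)
  have hps₀ : p ≤ s₀ := le_max_left _ _
  have PerW : Per x p (p + n) g := by
    intro j hj hjE
    have e1 : x j = x (j + a * n) := per_shift Per1 a j hj (by omega)
    have e2 : x (j + a * n) = x (j + a * n + g) := hPerg (j + a * n) (by omega) (by omega)
    have e3 : x (j + g) = x (j + g + a * n) := per_shift Per1 a (j + g) (by omega) (by omega)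
    rw [e1, e2, e3]; congr 1; omega
  rcases Nat.lt_or_ge g n with hlt | hge
  · exact absurd (prim_no_small_period hw0 hprim PerW hgn hg1 hlt) (by simp)
  · have : g = n := by omega
    rw [← this]
    exact Nat.le_of_dvd (by omega) hgq

/-- Aperiodic case: construction of a right special factor of every length `L ≥ 2|w|`
associated with a primitive word `w` of unbounded exponent. -/
lemma rs_package {x : ℕ → A}
    (haper : ¬ ∃ q, 1 ≤ q ∧ ∃ N, ∀ i, N ≤ i → x (i + q) = x i)
    {w : List A} (hprim : Primitive w) (hub : UnboundedExponent x w)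
    (L : ℕ) (hL : 2 * w.length ≤ L) :
    ∃ s m, s + L = m + w.length ∧
      Per x s (s + L) w.length ∧
      (∃ p, p + 2 * w.length ≤ s ∧ w = factorAt x p w.length ∧
        (∀ j, p ≤ j → j < m → x j = x (j + w.length))) ∧
      x (m + w.length) ≠ x m ∧
      factorAt x s L ++ [x (m + w.length)] ∈ Fset x (L + 1) ∧
      factorAt x s L ++ [x m] ∈ Fset x (L + 1) := by
  classical
  set n := w.length with hndef
  have hn : 1 ≤ n := prim_length_pos hprim
  obtain ⟨p, hocc⟩ := occ_of_ub hub (L + 1 + 1) (by omega)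
  have Per1 : Per x p (p + (L + 1 + 1) * n) n := occ_per hocc
  have hw0 : w = factorAt x p n := occ_head hocc
  push_neg at haper
  obtain ⟨i0, hi0p, hi0ne⟩ := haper n hn p
  have hPex : ∃ j, x (p + j + n) ≠ x (p + j) := by
    refine ⟨i0 - p, ?_⟩
    have e1 : p + (i0 - p) = i0 := by omega
    rw [e1]
    exact hi0ne
  set d := Nat.find hPex with hddef
  set m := p + d with hmdef
  have hm_ne : x (m + n) ≠ x m := Nat.find_spec hPex
  have hm_min : ∀ j, j < d → x (p + j + n) = x (p + j) := by
    intro j hj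
    have := Nat.find_min hPex hj
    exact not_not.mp this
  have hd_ge : p + L + n ≤ m := by
    have hdk : (L + 1) * n ≤ d := by
      by_contra hcon
      push_neg at hcon
      have := Per1 (p + d) (by omega) (by
        have : (L + 1 + 1) * n = (L + 1) * n + n := by ring
        omega)
      exact hm_ne this.symm
    have : L + n ≤ (L + 1) * n := by nlinarith
    omega
  have hper_region : ∀ j, p ≤ j → j < m → x j = x (j + n) := by
    intro j h1 h2
    have := hm_min (j - p) (by omega)
    have e : p + (j - p) = j := by omega
    rw [e] at this
    exact this.symm
  set s := m + n - L with hsdef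
  have hs : s + L = m + n := by omega
  have hp2s : p + 2 * n ≤ s := by omega
  refine ⟨s, m, hs, ?_, ⟨p, hp2s, hw0, hper_region⟩, hm_ne, ?_, ?_⟩
  · intro j hj hjE
    exact hper_region j (by omega) (by omega)
  · have : factorAt x s L ++ [x (m + n)] = factorAt x s (L + 1) := by
      rw [factorAt_succ, hs]
    rw [this]
    exact factorAt_mem_Fset x _ _
  · have heq : factorAt x (s - n) L = factorAt x s L := by
      apply pointwise_eq_factorAt
      intro t ht
      have := hper_region (s - n + t) (by omega) (by omega)
      rw [this]; congr 1; omega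
    have e2 : s - n + L = m := by omega
    have : factorAt x s L ++ [x m] = factorAt x (s - n) (L + 1) := by
      rw [factorAt_succ, heq, e2]
    rw [this]
    exact factorAt_mem_Fset x _ _

/-- Two packages coming from primitive words of different lengths give different
right special factors. -/
lemma packages_ne {x : ℕ → A} {w w' : List A} {L s s' m' : ℕ}
    (hn : 1 ≤ w.length) (hprim' : Primitive w')
    (hlen : w.length < w'.length) (hLlen : w.length + w'.length ≤ L) (hL2 : 2 * w'.length ≤ L)
    (hs' : s' + L = m' + w'.length)
    (hPerU : Per x s (s + L) w.length)
    (hp' : ∃ p', p' + 2 * w'.length ≤ s' ∧ w' = factorAt x p' w'.length ∧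
      (∀ j, p' ≤ j → j < m' → x j = x (j + w'.length)))
    (hPerU' : Per x s' (s' + L) w'.length)
    (hEq : factorAt x s L = factorAt x s' L) : False := by
  set n := w.length with hndef
  set n' := w'.length with hn'def
  have hn' : 1 ≤ n' := prim_length_pos hprim'
  have hpt := factorAt_eq_pointwise hEq
  have PerU'' : Per x s' (s' + L) n := by
    intro j hj hjE
    have e0 : x (s + (j - s')) = x (s' + (j - s')) := hpt (j - s') (by omega)
    have e1 : x (s + (j - s')) = x (s + (j - s') + n) := hPerU (s + (j - s')) (by omega) (by omega)
    have e2 : x (s + (j - s' + n)) = x (s' + (j - s' + n)) := hpt (j - s' + n) (by omega)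
    have ej : s' + (j - s') = j := by omega
    have ej2 : s' + (j - s' + n) = j + n := by omega
    have ej3 : s + (j - s') + n = s + (j - s' + n) := by omega
    rw [ej] at e0
    rw [ej3] at e1
    rw [ej2] at e2
    rw [← e0, e1, e2]
  have hPerg : Per x s' (s' + L) (Nat.gcd n n') :=
    fine_wilf x L n n' s' hn hn' (by omega) PerU'' hPerU'
  set g := Nat.gcd n n' with hgdef
  have hg1 : 1 ≤ g := Nat.pos_of_ne_zero (by
    intro h0; rw [hgdef] at h0; exact absurd (Nat.eq_zero_of_gcd_eq_zero_left h0) (by omega))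
  have hgn' : g ∣ n' := Nat.gcd_dvd_right _ _
  have hgle : g ≤ n := Nat.le_of_dvd (by omega) (Nat.gcd_dvd_left _ _)
  obtain ⟨p', hps', hw0', hregion'⟩ := hp'
  have PerR : Per x p' (m' + n') n' := by
    intro j hj hjE
    exact hregion' j hj (by omega)
  obtain ⟨a, ha1, ha2⟩ := exists_multiple_in n' hn' (s' - p')
  have hpp : p' ≤ s' := by omega
  have PerW' : Per x p' (p' + n') g := by
    intro j hj hjE
    have e1 : x j = x (j + a * n') := per_shift PerR a j hj (by omega)
    have e2 : x (j + a * n') = x (j + a * n' + g) :=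
      hPerg (j + a * n') (by omega) (by omega)
    have e3 : x (j + g) = x (j + g + a * n') := per_shift PerR a (j + g) (by omega) (by omega)
    rw [e1, e2, e3]; congr 1; omega
  exact prim_no_small_period hw0' hprim' PerW' hgn' hg1 (by omega)

end Discreteness

/-- An infinite word of linear factor complexity is discrete: only finitely many
primitive words occur in it with unbounded exponent. -/
theorem linear_complexity_implies_discrete {A : Type*} [Fintype A] (x : ℕ → A) (c : ℕ)
    (hc : ∀ n : ℕ, 1 ≤ n → {w : List A | w.length = n ∧ IsFactor x w}.ncard ≤ c * n) :
    {w : List A | Primitive w ∧ UnboundedExponent x w}.Finite := by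
  classical
  set S := {w : List A | Primitive w ∧ UnboundedExponent x w} with hSdef
  have hcF : ∀ n : ℕ, 1 ≤ n → (Fset x n).ncard ≤ c * n := hc
  by_cases hev : ∃ q, 1 ≤ q ∧ ∃ N, ∀ i, N ≤ i → x (i + q) = x i
  · -- eventually periodic: all lengths bounded by q
    obtain ⟨q, hq, N, hN⟩ := hev
    apply (finite_length_le q).subset
    intro w hw
    exact length_le_period hq hN hw.1 hw.2
  · -- aperiodic case
    by_contra hinf
    have hSinf : S.Infinite := hinf
    -- the set of lengths of words in S is infinite
    have himg : (Set.image List.length S).Infinite := by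
      intro hfin
      apply hSinf
      have hsub : S ⊆ ⋃ n ∈ Set.image List.length S, {l : List A | l.length = n} := by
        intro w hw
        exact Set.mem_biUnion (Set.mem_image_of_mem _ hw) rfl
      exact (hfin.biUnion fun n _ => finite_length_eq n).subset hsub
    set e := himg.natEmbedding with hedef
    -- pick c+1 words with pairwise distinct lengths
    have hWex : ∀ i : Fin (c + 1), ∃ w, w ∈ S ∧ w.length = (e i : ℕ) := by
      intro i
      obtain ⟨w, hw, hlen⟩ := (e i).2
      exact ⟨w, hw, hlen⟩
    choose W hWS hWlen using hWex
    have hWne : ∀ i j : Fin (c+1), i ≠ j → (W i).length ≠ (W j).length := by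
      intro i j hij hcon
      rw [hWlen i, hWlen j] at hcon
      exact hij (Fin.val_injective (e.injective (Subtype.ext hcon)))
    set Nmax := Finset.univ.sup (fun i : Fin (c+1) => (W i).length) with hNmax
    have hWle : ∀ i, (W i).length ≤ Nmax := fun i =>
      Finset.le_sup (f := fun i : Fin (c+1) => (W i).length) (Finset.mem_univ i)
    set L₀ := 2 * Nmax + 2 with hL₀
    -- complexity increases by at least c+1 at every length ≥ L₀
    have hstep : ∀ L, L₀ ≤ L → (Fset x L).ncard + (c + 1) ≤ (Fset x (L + 1)).ncard := by
      intro L hLL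
      have hpack : ∀ i : Fin (c+1), ∃ s m, s + L = m + (W i).length ∧
          Per x s (s + L) (W i).length ∧
          (∃ p, p + 2 * (W i).length ≤ s ∧ W i = factorAt x p (W i).length ∧
            (∀ j, p ≤ j → j < m → x j = x (j + (W i).length))) ∧
          x (m + (W i).length) ≠ x m ∧
          factorAt x s L ++ [x (m + (W i).length)] ∈ Fset x (L + 1) ∧
          factorAt x s L ++ [x m] ∈ Fset x (L + 1) := by
        intro i
        exact rs_package hev (hWS i).1 (hWS i).2 L (by
          have := hWle i
          omega)
      choose s m hsm hPerU hp hne hmem1 hmem2 using hpack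
      have hinj : Function.Injective (fun i : Fin (c+1) => factorAt x (s i) L) := by
        intro i j hij
        by_contra hijne
        have hne' : i ≠ j := fun h => hijne (by rw [h])
        simp only at hij
        rcases Nat.lt_or_ge (W i).length (W j).length with hlt | hge
        · exact packages_ne (prim_length_pos (hWS i).1) (hWS j).1 hlt
            (by have := hWle i; have := hWle j; omega)
            (by have := hWle j; omega)
            (hsm j) (hPerU i) (hp j) (hPerU j) hij
        · have hlt : (W j).length < (W i).length := by
            have := hWne i j hne'
            omega
          exact packages_ne (prim_length_pos (hWS j).1) (hWS i).1 hlt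
            (by have := hWle i; have := hWle j; omega)
            (by have := hWle i; omega)
            (hsm i) (hPerU j) (hp i) (hPerU i) hij.symm
      exact count_step x L (c+1) (fun i => factorAt x (s i) L)
        (fun i => x (m i + (W i).length)) (fun i => x (m i))
        hinj (fun i => factorAt_mem_Fset x _ _) hne hmem1 hmem2
    -- growth of complexity
    have hgrow : ∀ t : ℕ, (c + 1) * t ≤ (Fset x (L₀ + t)).ncard := by
      intro t
      induction t with
      | zero => simp
      | succ t ih =>
        have hst := hstep (L₀ + t) (by omega)
        have e1 : L₀ + (t + 1) = L₀ + t + 1 := by omega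
        rw [e1]
        calc (c+1) * (t+1) = (c+1) * t + (c+1) := by ring
          _ ≤ (Fset x (L₀ + t)).ncard + (c+1) := by omega
          _ ≤ (Fset x (L₀ + t + 1)).ncard := hst
    have h1 := hgrow (c * L₀ + 1)
    have h2 := hcF (L₀ + (c * L₀ + 1)) (by omega)
    nlinarith
end

section
/- Let k ≥ 2 be an integer, A a finite alphabet, and x : ℕ → A a k-automatic sequence. Then there exists a bound B (depending only on x) such that for every nonempty finite word y, if y^B occurs as a factor of x, then y^n occurs as a factor of x for every n ≥ 1 (i.e., y occurs with unbounded exponent in x). -/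
/-- `x : ℕ → A` is a `k`-automatic sequence: there is a DFAO (finite state set `Q`,
transition function `δ` on base-`k` digits, initial state `q₀`, output map `τ`) such that
`x n` is the output of the state reached from `q₀` by reading the base-`k` digits of `n`,
most significant digit first. -/
def IsKAutomatic {A : Type*} (k : ℕ) (hk : 2 ≤ k) (x : ℕ → A) : Prop :=
  ∃ (Q : Type) (_ : Fintype Q) (δ : Q → Fin k → Q) (q₀ : Q) (τ : Q → A),
    ∀ n : ℕ,
      x n = τ (((Nat.digits k n).reverse).foldl
        (fun q d => δ q ⟨d % k, Nat.mod_lt d (by omega)⟩) q₀)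

open Function

theorem Nat.mul_pow_add_lt_pow_add {k u t a b : ℕ} (hu : u < k ^ a) (ht : t < k ^ b) :
    u * k ^ b + t < k ^ (a + b) := by
  rw [pow_add, add_comm, mul_comm u, mul_comm (k ^ a)]
  exact Nat.add_mul_lt_mul_of_lt_of_lt ht hu

theorem exists_lt_le_card_map_eq {β : Type*} [Fintype β] (f : ℕ → β) :
    ∃ a b, a < b ∧ b ≤ Fintype.card β ∧ f a = f b := by
  obtain ⟨i, j, hij, h⟩ := Fintype.exists_ne_map_eq_of_card_lt
    (fun i : Fin (Fintype.card β + 1) => f i) (by simp)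
  rcases lt_or_gt_of_ne (Fin.val_injective.ne hij) with hlt | hlt
  · exact ⟨i, j, hlt, Nat.lt_succ_iff.mp j.isLt, h⟩
  · exact ⟨j, i, hlt, Nat.lt_succ_iff.mp i.isLt, h.symm⟩

theorem exists_eventually_periodic_of_succ {β : Type*} [Fintype β] {G : ℕ → β} (F : β → β)
    (hG : ∀ j, G (j + 1) = F (G j)) :
    ∃ a P, 0 < P ∧ a + P ≤ Fintype.card β ∧ ∀ t, G (a + t * P) = G a := by
  obtain ⟨a, b, hab, hb, heq⟩ := exists_lt_le_card_map_eq G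
  have hshift : ∀ j, G (a + j + (b - a)) = G (a + j) := by
    intro j
    induction j with
    | zero => rw [add_zero, Nat.add_sub_cancel' hab.le, heq]
    | succ j ih => rw [← add_assoc, add_right_comm, hG, ih, hG]
  refine ⟨a, b - a, by omega, by omega, fun t => ?_⟩
  induction t with
  | zero => rw [zero_mul, add_zero]
  | succ t ih => rw [add_mul, one_mul, ← add_assoc, hshift, ih]

theorem exists_pow_add_mul_eq_pow {M : Type*} [Monoid M] [Fintype M] (g : M) :
    ∃ a P, 0 < P ∧ a + P ≤ Fintype.card M ∧ ∀ t, g ^ (a + t * P) = g ^ a :=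
  exists_eventually_periodic_of_succ (· * g) fun j => pow_succ g j

theorem Function.Periodic.of_eq_on_window {α : Type*} {Y : ℕ → α} {p : ℕ} (hY : Periodic Y p)
    (hp : 0 < p) {a S : ℕ} (h : ∀ i < p, Y (a + S + i) = Y (a + i)) : Periodic Y S := by
  have hmod : ∀ z i, Y (z + i) = Y (z + i % p) := fun z i => by
    conv_lhs => rw [← Nat.mod_add_div' i p, ← add_assoc]
    exact hY.nat_mul (i / p) _
  have hall : ∀ i, Y (a + S + i) = Y (a + i) := fun i => by
    rw [hmod, hmod a, h _ (Nat.mod_lt i hp)]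
  intro t
  have hap : a ≤ a * p := Nat.le_mul_of_pos_right a hp
  calc Y (t + S) = Y (t + S + a * p) := (hY.nat_mul a _).symm
    _ = Y (a + S + (t + a * p - a)) := by congr 1; omega
    _ = Y (a + (t + a * p - a)) := hall _
    _ = Y (t + a * p) := by congr 1; omega
    _ = Y t := hY.nat_mul a t

section Automaton

variable {Q : Type*} (k : ℕ) (step : Q → ℕ → Q)

/-- The state reached from `q` by reading the `ℓ` lowest base-`k` digits of `t`, most
significant first, leading zeros included. -/
def readDigits (q : Q) : ℕ → ℕ → Q
  | 0, _ => q
  | ℓ + 1, t => step (readDigits q ℓ (t / k)) (t % k)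

variable {k}

theorem readDigits_add (hk : 0 < k) (q : Q) (a b t₁ t₂ : ℕ) (ht₂ : t₂ < k ^ b) :
    readDigits k step q (a + b) (t₁ * k ^ b + t₂) =
      readDigits k step (readDigits k step q a t₁) b t₂ := by
  induction b generalizing t₂ with
  | zero =>
    obtain rfl : t₂ = 0 := by simpa using ht₂
    simp [readDigits]
  | succ b ih =>
    have hdiv : (t₁ * k ^ (b + 1) + t₂) / k = t₁ * k ^ b + t₂ / k := by
      rw [pow_succ, ← mul_assoc, mul_comm _ k, Nat.mul_add_div hk]
    have hmod : (t₁ * k ^ (b + 1) + t₂) % k = t₂ % k := by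
      rw [pow_succ, ← mul_assoc, Nat.mul_add_mod_self_right]
    rw [← add_assoc, readDigits, hdiv, hmod,
      ih _ (Nat.div_lt_of_lt_mul (by rwa [← pow_succ'])), readDigits]

theorem foldl_reverse_digits (hk : 1 < k) (q : Q) {m : ℕ} (hm : 0 < m) :
    (Nat.digits k m).reverse.foldl step q =
      step ((Nat.digits k (m / k)).reverse.foldl step q) (m % k) := by
  rw [Nat.digits_def' hk hm, List.reverse_cons, List.foldl_append]
  rfl

theorem foldl_reverse_digits_mul_pow_add (hk : 1 < k) (q : Q) {n : ℕ} (hn : 0 < n) (ℓ : ℕ)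
    {t : ℕ} (ht : t < k ^ ℓ) :
    (Nat.digits k (n * k ^ ℓ + t)).reverse.foldl step q =
      readDigits k step ((Nat.digits k n).reverse.foldl step q) ℓ t := by
  induction ℓ generalizing t with
  | zero =>
    obtain rfl : t = 0 := by simpa using ht
    simp [readDigits]
  | succ ℓ ih =>
    have hpos : 0 < n * k ^ (ℓ + 1) + t := by positivity
    have hdiv : (n * k ^ (ℓ + 1) + t) / k = n * k ^ ℓ + t / k := by
      rw [pow_succ, ← mul_assoc, mul_comm _ k, Nat.mul_add_div (by omega)]
    have hmod : (n * k ^ (ℓ + 1) + t) % k = t % k := by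
      rw [pow_succ, ← mul_assoc, Nat.mul_add_mod_self_right]
    rw [foldl_reverse_digits step hk q hpos, hdiv, hmod,
      ih (Nat.div_lt_of_lt_mul (by rwa [← pow_succ'])), readDigits]

end Automaton

section Pumping

variable {Q R C : Type*} (k : ℕ) (step : Q → ℕ → Q) [Semiring R] (out : Q → C) (E : R → C)

/-- Reading the `ℓ`-digit numbers `t` from `v` outputs the word `E (φ + t)`; a phase `φ` in a
finite semiring such as `ZMod D` encodes a periodic word. -/
def Generates (v : Q) (ℓ : ℕ) (φ : R) : Prop :=
  ∀ t < k ^ ℓ, out (readDigits k step v ℓ t) = E (φ + t)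

def Reachable (q v : Q) : Prop :=
  ∃ w u, u < k ^ w ∧ readDigits k step q w u = v

variable {k step out E}

theorem generates_add_iff (hk : 0 < k) {v : Q} {c ℓ : ℕ} {φ : R} :
    Generates k step out E v (c + ℓ) φ ↔
      ∀ u < k ^ c, Generates k step out E (readDigits k step v c u) ℓ (φ + u * k ^ ℓ) := by
  have hcast : ∀ u t : ℕ, φ + ((u * k ^ ℓ + t : ℕ) : R) = φ + u * k ^ ℓ + t := fun u t => by
    push_cast; exact (add_assoc _ _ _).symm
  constructor
  · intro h u hu t ht
    rw [← readDigits_add step hk _ _ _ _ _ ht, h _ (Nat.mul_pow_add_lt_pow_add hu ht), hcast]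
  · intro h t ht
    have hkℓ : 0 < k ^ ℓ := pow_pos hk ℓ
    have hu : t / k ^ ℓ < k ^ c := Nat.div_lt_of_lt_mul (by rwa [← pow_add, add_comm])
    have hr : t % k ^ ℓ < k ^ ℓ := Nat.mod_lt t hkℓ
    have := h _ hu _ hr
    rwa [← readDigits_add step hk _ _ _ _ _ hr, Nat.div_add_mod', ← hcast,
      Nat.div_add_mod'] at this

theorem Generates.readDigits_zero (hk : 0 < k) {q : Q} {m ℓ : ℕ} (hℓ : ℓ ≤ m)
    (hq : Generates k step out E q m 0) :
    Generates k step out E (readDigits k step q (m - ℓ) 0) ℓ 0 := by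
  rw [← Nat.sub_add_cancel hℓ, generates_add_iff hk] at hq
  simpa using hq 0 (pow_pos hk _)

theorem Reachable.readDigits (hk : 0 < k) {q v : Q} (hv : Reachable k step q v) {c u : ℕ}
    (hu : u < k ^ c) : Reachable k step q (readDigits k step v c u) := by
  obtain ⟨w, u', hu', rfl⟩ := hv
  exact ⟨w + c, u' * k ^ c + u, Nat.mul_pow_add_lt_pow_add hu' hu,
    readDigits_add step hk q w c u' u hu⟩

theorem exists_generates_of_generates [Fintype Q] [Fintype R] (hk : 0 < k) {q : Q} {m : ℕ}
    (hm : Fintype.card R * 2 ^ (Fintype.card Q * Fintype.card R) ≤ m)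
    (hq : Generates k step out E q m 0) (L : ℕ) :
    ∃ v ℓ φ, Reachable k step q v ∧ L ≤ ℓ ∧ Generates k step out E v ℓ φ := by
  classical
  obtain ⟨ℓ₀, c, hc, hℓ₀c, hκ⟩ := exists_pow_add_mul_eq_pow (k : R)
  -- On the depths `ℓ₀ + j * c` the weight `k ^ ℓ` of the leading digits is constant in `R`,
  -- so the sets of generating (state, phase) pairs obey a fixed recurrence.
  let G : ℕ → Finset (Q × R) := fun j => Finset.univ.filter fun vφ =>
    Reachable k step q vφ.1 ∧ Generates k step out E vφ.1 (ℓ₀ + j * c) vφ.2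
  let F : Finset (Q × R) → Finset (Q × R) := fun S => Finset.univ.filter fun vφ =>
    Reachable k step q vφ.1 ∧
      ∀ u < k ^ c, (readDigits k step vφ.1 c u, vφ.2 + u * (k : R) ^ ℓ₀) ∈ S
  have hGF : ∀ j, G (j + 1) = F (G j) := by
    intro j
    ext ⟨v, φ⟩
    simp only [G, F, Finset.mem_filter, Finset.mem_univ, true_and]
    rw [show ℓ₀ + (j + 1) * c = c + (ℓ₀ + j * c) by ring, generates_add_iff hk, hκ]
    exact and_congr_right fun hv => forall₂_congr fun u hu =>
      (and_iff_right (hv.readDigits hk hu)).symm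
  obtain ⟨a, P, hP, haP, hGa⟩ := exists_eventually_periodic_of_succ F hGF
  have ha : ℓ₀ + a * c ≤ m := by
    have hcard : a + P ≤ 2 ^ (Fintype.card Q * Fintype.card R) := by
      simpa [Fintype.card_finset] using haP
    calc ℓ₀ + a * c ≤ (a + 1) * Fintype.card R := by nlinarith
      _ ≤ 2 ^ (Fintype.card Q * Fintype.card R) * Fintype.card R :=
          Nat.mul_le_mul_right _ (by omega)
      _ ≤ m := by rw [mul_comm]; exact hm
  have hmem : (readDigits k step q (m - (ℓ₀ + a * c)) 0, 0) ∈ G (a + L * P) := by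
    rw [hGa]
    simp only [G, Finset.mem_filter, Finset.mem_univ, true_and]
    exact ⟨⟨_, 0, pow_pos hk _, rfl⟩, hq.readDigits_zero hk ha⟩
  simp only [G, Finset.mem_filter, Finset.mem_univ, true_and] at hmem
  refine ⟨_, _, _, hmem.1, ?_, hmem.2⟩
  calc L ≤ L * (P * c) := Nat.le_mul_of_pos_right _ (Nat.mul_pos hP hc)
    _ ≤ ℓ₀ + (a + L * P) * c := by nlinarith

end Pumping

section Sequence

variable {Q α : Type*} (k : ℕ) (step : Q → ℕ → Q) (x : ℕ → α) (τ : Q → α)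

/-- `x` restricted to the positions whose base-`k` expansion extends that of `n` is the output
of the automaton started in `v`. -/
def IsStateAt (v : Q) (n : ℕ) : Prop :=
  ∀ ℓ t, t < k ^ ℓ → x (n * k ^ ℓ + t) = τ (readDigits k step v ℓ t)

variable {k step x τ}

theorem isStateAt_foldl_reverse_digits (hk : 1 < k) {q₀ : Q}
    (hx : ∀ n, x n = τ ((Nat.digits k n).reverse.foldl step q₀)) {n : ℕ} (hn : 0 < n) :
    IsStateAt k step x τ ((Nat.digits k n).reverse.foldl step q₀) n := fun ℓ _ ht => by
  rw [hx, foldl_reverse_digits_mul_pow_add step hk q₀ hn ℓ ht]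

theorem IsStateAt.readDigits (hk : 0 < k) {v : Q} {n : ℕ} (h : IsStateAt k step x τ v n)
    {w u : ℕ} (hu : u < k ^ w) :
    IsStateAt k step x τ (readDigits k step v w u) (n * k ^ w + u) := fun ℓ t ht => by
  rw [← readDigits_add step hk _ _ _ _ _ ht, ← h _ _ (Nat.mul_pow_add_lt_pow_add hu ht)]
  congr 1
  ring

end Sequence

section Blocks

variable {Q α : Type*} {k : ℕ} (step : Q → ℕ → Q)

def blockOut (τ : Q → α) (μ : ℕ) (v : Q) : Fin (k ^ μ) → α :=
  fun i => τ (readDigits k step v μ i)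

/-- Indexed by `ZMod D`, which is meaningful for `Y` of period `D * T`. -/
def blockPattern (Y : ℕ → α) (c T D : ℕ) (z : ZMod D) : Fin T → α :=
  fun i => Y (c + z.val * T + i)

variable {step} {Y : ℕ → α} {c T D : ℕ}

theorem blockPattern_add_natCast [NeZero D] (hY : Periodic Y (D * T)) (z : ZMod D)
    (j : ℕ) (i : Fin T) : blockPattern Y c T D (z + j) i = Y (c + z.val * T + j * T + i) := by
  have hval : (z + j).val = (z.val + j) % D := by
    rw [← ZMod.val_natCast, Nat.cast_add, ZMod.natCast_zmod_val]
  show Y (c + (z + j).val * T + i) = _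
  rw [hval]
  set m := z.val + j
  calc Y (c + m % D * T + i) = Y (c + m % D * T + i + m / D * (D * T)) :=
        (hY.nat_mul _ _).symm
    _ = Y (c + (m % D + D * (m / D)) * T + i) := by congr 1; ring
    _ = Y (c + z.val * T + j * T + i) := by rw [Nat.mod_add_div]; congr 1; ring

variable {τ : Q → α} {μ M : ℕ} {r : Q}

theorem generates_blockOut (hk : 0 < k) [NeZero D] (hY : Periodic Y (D * k ^ μ))
    (hw : ∀ t < k ^ (M + μ), τ (readDigits k step r (M + μ) t) = Y (c + t)) :
    Generates k step (blockOut step τ μ) (blockPattern Y c (k ^ μ) D) r M 0 := by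
  intro j hj
  funext i
  rw [blockOut, ← readDigits_add step hk _ _ _ _ _ i.isLt,
    hw _ (Nat.mul_pow_add_lt_pow_add hj i.isLt), blockPattern_add_natCast hY, ZMod.val_zero,
    zero_mul, add_zero, add_assoc]

theorem Generates.apply_eq_of_isStateAt (hk : 0 < k) [NeZero D]
    (hY : Periodic Y (D * k ^ μ)) {x : ℕ → α} {v : Q} {n ℓ : ℕ} {ψ : ZMod D}
    (hv : IsStateAt k step x τ v n)
    (hgen : Generates k step (blockOut step τ μ) (blockPattern Y c (k ^ μ) D) v ℓ ψ) :
    ∀ t < k ^ ℓ * k ^ μ, x (n * k ^ (ℓ + μ) + t) = Y (c + ψ.val * k ^ μ + t) := by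
  intro t ht
  have hq : t / k ^ μ < k ^ ℓ := Nat.div_lt_of_lt_mul (by rwa [mul_comm])
  have hr : t % k ^ μ < k ^ μ := Nat.mod_lt t (pow_pos hk μ)
  have hblock := congrFun (hgen _ hq) ⟨t % k ^ μ, hr⟩
  rw [blockOut, blockPattern_add_natCast hY] at hblock
  rw [hv _ _ (by rwa [pow_add]), ← Nat.div_add_mod' t (k ^ μ),
    readDigits_add step hk _ _ _ _ _ hr, hblock, add_assoc _ (t / k ^ μ * k ^ μ)]

theorem exists_block_period [Fintype Q] (hk : 1 < k) {p : ℕ} (hp : 0 < p)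
    (hY : Periodic Y p) (hpT : p ≤ k ^ μ) (hM : Fintype.card Q ≤ M)
    (hw : ∀ t < k ^ (M + μ), τ (readDigits k step r (M + μ) t) = Y (c + t)) :
    ∃ D, 0 < D ∧ D ≤ Fintype.card Q ∧ Periodic Y (D * k ^ μ) := by
  obtain ⟨a, b, hab, hb, heq⟩ := exists_lt_le_card_map_eq fun j => readDigits k step r M j
  have hbM : b < k ^ M := hb.trans_lt (hM.trans_lt (Nat.lt_pow_self hk))
  have hblock : ∀ j < k ^ M, ∀ i < k ^ μ,
      Y (c + j * k ^ μ + i) = τ (readDigits k step (readDigits k step r M j) μ i) := by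
    intro j hj i hi
    rw [← readDigits_add step (by omega) _ _ _ _ _ hi, hw _ (Nat.mul_pow_add_lt_pow_add hj hi),
      add_assoc]
  -- Equal states at depth `M` give equal blocks of length `k ^ μ ≥ p` in `Y`.
  refine ⟨b - a, by omega, by omega, hY.of_eq_on_window hp (a := c + a * k ^ μ) fun i hi => ?_⟩
  have hi' : i < k ^ μ := hi.trans_le hpT
  calc Y (c + a * k ^ μ + (b - a) * k ^ μ + i) = Y (c + b * k ^ μ + i) := by
        rw [add_assoc c, ← add_mul, Nat.add_sub_cancel' hab.le]
    _ = Y (c + a * k ^ μ + i) := by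
        rw [hblock b hbM i hi', hblock a (hab.trans hbM) i hi', heq]

end Blocks

section Words

variable {α : Type*}

def periodicExt (y : List α) (hy : y ≠ []) (t : ℕ) : α :=
  y[t % y.length]'(Nat.mod_lt _ (List.length_pos_iff.mpr hy))

variable {y : List α}

theorem periodicExt_periodic (hy : y ≠ []) : Periodic (periodicExt y hy) y.length :=
  fun t => by simp only [periodicExt, Nat.add_mod_right]

theorem wpow_eq_map_periodicExt (hy : y ≠ []) (n : ℕ) :
    wpow y n = (List.range (n * y.length)).map (periodicExt y hy) := by
  induction n with
  | zero => simp [wpow]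
  | succ n ih =>
    have hy' : y = (List.range y.length).map (periodicExt y hy) := by
      apply List.ext_getElem (by simp)
      intro t ht _
      simp [periodicExt, Nat.mod_eq_of_lt ht]
    rw [wpow, List.replicate_succ, List.flatten_cons, ← wpow, ih, add_one_mul, add_comm,
      List.range_add, List.map_append, List.map_map, ← hy']
    congr 1
    exact List.map_congr_left fun t _ => by
      rw [comp_apply, add_comm, periodicExt_periodic hy]

theorem isFactor_wpow_iff (hy : y ≠ []) {x : ℕ → α} {n : ℕ} :
    IsFactor x (wpow y n) ↔ ∃ i, ∀ t < n * y.length, x (i + t) = periodicExt y hy t := by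
  simp only [IsFactor, wpow_eq_map_periodicExt hy, List.length_map, List.length_range, factorAt,
    List.map_inj_left, List.mem_range, eq_comm]

theorem unboundedExponent_of_forall_window (hy : y ≠ []) {x : ℕ → α}
    (h : ∀ L, ∃ i c, ∀ t < L, x (i + t) = periodicExt y hy (c + t)) :
    UnboundedExponent x y := by
  intro n _
  obtain ⟨i, c, hic⟩ := h (n * y.length + y.length)
  -- Shift the window so that it starts at a multiple of the period.
  refine (isFactor_wpow_iff hy).2 ⟨i + (y.length - c % y.length), fun t ht => ?_⟩
  have hc := Nat.div_add_mod' c y.length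
  have hc' : c % y.length ≤ y.length := (Nat.mod_lt c (List.length_pos_iff.mpr hy)).le
  rw [add_assoc, hic _ (by omega), ← (periodicExt_periodic hy).nat_mul (c / y.length + 1) t]
  congr 1
  rw [Nat.cast_id, add_one_mul]
  omega

theorem exists_aligned_window {x Z : ℕ → α} {i₀ K : ℕ} (hK : 0 < K)
    (h : ∀ t < 2 * K, x (i₀ + t) = Z t) : ∃ n c, 0 < n ∧ ∀ t < K, x (n * K + t) = Z (c + t) := by
  obtain ⟨q, r, hr, rfl⟩ : ∃ q r, r < K ∧ i₀ = q * K + r :=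
    ⟨i₀ / K, i₀ % K, Nat.mod_lt i₀ hK, (Nat.div_add_mod' i₀ K).symm⟩
  refine ⟨q + 1, K - r, q.succ_pos, fun t ht => ?_⟩
  rw [← h _ (by omega), add_one_mul]
  congr 1
  omega

end Words

theorem exists_window_of_aligned_window {Q α : Type*} [Fintype Q] {k : ℕ}
    {step : Q → ℕ → Q} (hk : 1 < k) {x Y : ℕ → α} {τ : Q → α} {p μ M c n : ℕ} {r : Q}
    (hp : 0 < p) (hY : Periodic Y p) (hpT : p ≤ k ^ μ)
    (hM : Fintype.card Q * 2 ^ (Fintype.card Q * Fintype.card Q) ≤ M)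
    (hr : IsStateAt k step x τ r n)
    (hw : ∀ t < k ^ (M + μ), x (n * k ^ (M + μ) + t) = Y (c + t)) (L : ℕ) :
    ∃ i c', ∀ t < L, x (i + t) = Y (c' + t) := by
  have hw' : ∀ t < k ^ (M + μ), τ (readDigits k step r (M + μ) t) = Y (c + t) :=
    fun t ht => by rw [← hr _ _ ht, hw t ht]
  obtain ⟨D, hD, hDQ, hYD⟩ := exists_block_period hk hp hY hpT
    ((Nat.le_mul_of_pos_right _ (by positivity)).trans hM) hw'
  have : NeZero D := ⟨hD.ne'⟩
  have hm : Fintype.card (ZMod D) * 2 ^ (Fintype.card Q * Fintype.card (ZMod D)) ≤ M := by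
    rw [ZMod.card]
    exact le_trans (by gcongr; omega) hM
  obtain ⟨v, ℓ, ψ, ⟨w, u, hu, rfl⟩, hLℓ, hgen⟩ :=
    exists_generates_of_generates (by omega) hm (generates_blockOut (by omega) hYD hw') L
  refine ⟨(n * k ^ w + u) * k ^ (ℓ + μ), c + ψ.val * k ^ μ,
    fun t ht => hgen.apply_eq_of_isStateAt (by omega) hYD (hr.readDigits (by omega) hu) t ?_⟩
  calc t < ℓ := ht.trans_le hLℓ
    _ < k ^ ℓ := Nat.lt_pow_self hk
    _ ≤ k ^ ℓ * k ^ μ := Nat.le_mul_of_pos_right _ (by positivity)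

theorem automatic_power_dichotomy_general {A : Type*} (k : ℕ) (hk : 2 ≤ k)
    (x : ℕ → A) (hx : IsKAutomatic k hk x) :
    ∃ B : ℕ, ∀ y : List A, y ≠ [] → IsFactor x (wpow y B) → UnboundedExponent x y := by
  obtain ⟨Q, _, δ, q₀, τ, hxs⟩ := hx
  set N := Fintype.card Q
  set M := N * 2 ^ (N * N)
  refine ⟨2 * k ^ (M + 1), fun y hy hyB => ?_⟩
  have hp : 0 < y.length := List.length_pos_iff.mpr hy
  set μ := Nat.log k y.length + 1
  have hpT : y.length ≤ k ^ μ := (Nat.lt_pow_succ_log_self hk _).le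
  have hTp : k ^ μ ≤ k * y.length := by
    rw [pow_succ']
    exact Nat.mul_le_mul_left k (Nat.pow_log_le_self k hp.ne')
  obtain ⟨i₀, hi₀⟩ := (isFactor_wpow_iff hy).1 hyB
  have hlen : 2 * k ^ (M + μ) ≤ 2 * k ^ (M + 1) * y.length :=
    calc 2 * k ^ (M + μ) = 2 * k ^ M * k ^ μ := by rw [pow_add, mul_assoc]
      _ ≤ 2 * k ^ M * (k * y.length) := by gcongr
      _ = 2 * k ^ (M + 1) * y.length := by ring
  obtain ⟨n, c, hn, hwin⟩ :=
    exists_aligned_window (pow_pos (by omega) _) fun t ht => hi₀ t (ht.trans_le hlen)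
  exact unboundedExponent_of_forall_window hy (exists_window_of_aligned_window hk hp
    (periodicExt_periodic hy) hpT le_rfl (isStateAt_foldl_reverse_digits hk hxs hn) hwin)

/-- For a `k`-automatic sequence `x` there is a bound `B` such that any nonempty word `y`
with `y^B` a factor of `x` occurs with unbounded exponent in `x`. -/
theorem automatic_power_dichotomy {A : Type*} [Fintype A] (k : ℕ) (hk : 2 ≤ k)
    (x : ℕ → A) (hx : IsKAutomatic k hk x) :
    ∃ B : ℕ, ∀ y : List A, y ≠ [] → IsFactor x (wpow y B) → UnboundedExponent x y :=
  automatic_power_dichotomy_general k hk x hx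
end

section
/- Let Σ be a finite alphabet and let r and s be finite words over Σ that do not commute (rs ≠ sr). Then there exist finite words a, b over Σ such that a is not a prefix of b, b is not a prefix of a, and both r and s lie in {a,b}^*. -/
/-!
Run Euclid's algorithm on generating pairs, starting from `(r, s)`: while one generator `a` is a
prefix of the other, `b = a ++ c`, replace `b` by `c`. This keeps `r` and `s` in the generated
submonoid and strictly lowers the total length, since `a` cannot be empty. It also never produces
a commuting pair, because commuting generators only generate commuting words.
-/

namespace InStarPair

variable {A : Type*} {a b c r s t w : List A}

theorem left : InStarPair a b a := ⟨[a], by simp, by simp⟩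

theorem right : InStarPair a b b := ⟨[b], by simp, by simp⟩

theorem append {u v : List A} (hu : InStarPair a b u) (hv : InStarPair a b v) :
    InStarPair a b (u ++ v) := by
  obtain ⟨l₁, hl₁, rfl⟩ := hu
  obtain ⟨l₂, hl₂, rfl⟩ := hv
  exact ⟨l₁ ++ l₂, by simpa [or_imp, forall_and] using ⟨hl₁, hl₂⟩, by simp⟩

theorem mono {a' b' : List A} (ha : InStarPair a' b' a) (hb : InStarPair a' b' b)
    (hw : InStarPair a b w) : InStarPair a' b' w := by
  obtain ⟨l, hl, rfl⟩ := hw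
  induction l with
  | nil => exact ⟨[], by simp, rfl⟩
  | cons u l ih =>
    have hu : InStarPair a' b' u := by rcases hl u List.mem_cons_self with rfl | rfl <;> assumption
    exact hu.append (ih fun v hv => hl v (List.mem_cons_of_mem u hv))

theorem symm (h : InStarPair a b w) : InStarPair b a w := mono right left h

theorem of_append_right (h : InStarPair a (a ++ c) w) : InStarPair a c w :=
  mono left (left.append right) h

theorem append_comm (ha : t ++ a = a ++ t) (hb : t ++ b = b ++ t) (hw : InStarPair a b w) :
    t ++ w = w ++ t := by
  obtain ⟨l, hl, rfl⟩ := hw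
  induction l with
  | nil => simp
  | cons u l ih =>
    have hu : t ++ u = u ++ t := by rcases hl u List.mem_cons_self with rfl | rfl <;> assumption
    rw [List.flatten_cons, ← List.append_assoc, hu, List.append_assoc,
      ih fun v hv => hl v (List.mem_cons_of_mem u hv), List.append_assoc]

theorem append_comm_of_append_comm (hab : a ++ b = b ++ a) (hr : InStarPair a b r)
    (hs : InStarPair a b s) : r ++ s = s ++ r := by
  have has : a ++ s = s ++ a := append_comm rfl hab hs
  have hbs : b ++ s = s ++ b := append_comm hab.symm rfl hs
  exact (append_comm has.symm hbs.symm hr).symm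

theorem exists_shorter_of_isPrefix (hab : a <+: b) (hne : a ++ b ≠ b ++ a) :
    ∃ c : List A, c.length < b.length ∧ ∀ w, InStarPair a b w → InStarPair a c w := by
  obtain ⟨c, rfl⟩ := hab
  have ha : a ≠ [] := by rintro rfl; simp at hne
  refine ⟨c, ?_, fun w => of_append_right⟩
  simpa using List.length_pos_iff.mpr ha

theorem exists_prefixFree (h : r ++ s ≠ s ++ r) {a b : List A} (hr : InStarPair a b r)
    (hs : InStarPair a b s) :
    ∃ a' b' : List A, ¬ a' <+: b' ∧ ¬ b' <+: a' ∧ InStarPair a' b' r ∧ InStarPair a' b' s := by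
  have hab : a ++ b ≠ b ++ a := fun hab => h (append_comm_of_append_comm hab hr hs)
  by_cases hpre : a <+: b
  · obtain ⟨c, hc, hac⟩ := exists_shorter_of_isPrefix hpre hab
    exact exists_prefixFree h (hac r hr) (hac s hs)
  by_cases hpre' : b <+: a
  · obtain ⟨c, hc, hbc⟩ := exists_shorter_of_isPrefix hpre' hab.symm
    exact exists_prefixFree h (hbc r hr.symm) (hbc s hs.symm)
  exact ⟨a, b, hpre, hpre', hr, hs⟩
termination_by a.length + b.length

end InStarPair

theorem noncommuting_in_prefix_free_pair_general {A : Type*} (r s : List A)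
    (h : r ++ s ≠ s ++ r) :
    ∃ a b : List A, ¬ a <+: b ∧ ¬ b <+: a ∧ InStarPair a b r ∧ InStarPair a b s :=
  InStarPair.exists_prefixFree h .left .right

/-- If `r` and `s` do not commute, then they lie in `{a,b}^*` for some pair of words
`a`, `b` neither of which is a prefix of the other. -/
theorem noncommuting_in_prefix_free_pair {A : Type*} [Fintype A] (r s : List A)
    (h : r ++ s ≠ s ++ r) :
    ∃ a b : List A, ¬ a <+: b ∧ ¬ b <+: a ∧ InStarPair a b r ∧ InStarPair a b s :=
  noncommuting_in_prefix_free_pair_general r s h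
end

section
/- Let Σ be a finite alphabet and let a, b be nonempty finite words over Σ such that a is not a prefix of b and b is not a prefix of a. Then a and b generate a free submonoid of Σ^*: the monoid morphism from the free monoid on two letters x, y to Σ^* sending x ↦ a and y ↦ b is injective. -/
/-- If neither of the nonempty words `a`, `b` is a prefix of the other, then the monoid
morphism from the free monoid on two letters (encoded as `List Bool`, with
`false ↦ a` and `true ↦ b`) to `Σ^*` is injective, i.e. `a` and `b` generate a free
submonoid. -/
theorem free_submonoid_of_prefix_incomparable {A : Type*} [Fintype A] (a b : List A)
    (ha : a ≠ []) (hb : b ≠ []) (hab : ¬ a <+: b) (hba : ¬ b <+: a) :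
    Function.Injective (fun w : List Bool => sigmaMap a b w) := by
  intro w1 w2 h
  simp only at h
  induction w1 generalizing w2 with
  | nil =>
    cases w2 with
    | nil => rfl
    | cons c t =>
      exfalso
      simp only [sigmaMap, List.map_nil, List.flatten_nil, List.map_cons,
        List.flatten_cons] at h
      cases c
      · exact ha ((by simpa using h.symm : _ ∧ _).1)
      · exact hb ((by simpa using h.symm : _ ∧ _).1)
  | cons c t ih =>
    cases w2 with
    | nil =>
      exfalso
      simp only [sigmaMap, List.map_nil, List.flatten_nil, List.map_cons,
        List.flatten_cons] at h
      cases c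
      · exact ha ((by simpa using h : _ ∧ _).1)
      · exact hb ((by simpa using h : _ ∧ _).1)
    | cons d s =>
      simp only [sigmaMap, List.map_cons, List.flatten_cons] at h
      by_cases hcd : c = d
      · subst hcd
        have : sigmaMap a b t = sigmaMap a b s := by
          have := List.append_cancel_left h
          simpa [sigmaMap] using this
        rw [ih this]
      · exfalso
        have h1 : (if c then b else a) <+: ((if c then b else a) ++ (t.map fun x => if x then b else a).flatten) := List.prefix_append _ _
        have h2 : (if d then b else a) <+: ((if c then b else a) ++ (t.map fun x => if x then b else a).flatten) := by
          rw [h]; exact List.prefix_append _ _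
        have := List.prefix_or_prefix_of_prefix h1 h2
        cases c <;> cases d
        · exact hcd rfl
        · simp only [Bool.false_eq_true, if_false, if_true] at this
          exact this.elim hab hba
        · simp only [Bool.false_eq_true, if_false, if_true] at this
          exact this.elim hba hab
        · exact hcd rfl
end

section
/- Let p ≥ 1 and let w be a finite word over a two-letter alphabet {x,y} containing no factor x^p and no factor y^p. Then for every m ≥ 1, every factor of w of length (2p−1)·m contains at least m occurrences of the word xy (i.e., at least m positions i within the factor where letter x is immediately followed by letter y). -/
lemma countXY_cons (a : Bool) (l : List Bool) :
    countXY (a :: l) = (if [false, true] <+: a :: l then 1 else 0) + countXY l := by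
  simp only [countXY, List.length_cons, List.range_succ_eq_map, List.filter_cons,
    List.filter_map, List.length_map, List.drop_succ_cons, List.drop_zero, Function.comp_def]
  by_cases h : [false, true] <+: a :: l <;> simp [h, Nat.add_comm]

lemma countXY_append (u v : List Bool) : countXY u + countXY v ≤ countXY (u ++ v) := by
  induction u with
  | nil => simp [countXY]
  | cons a u ih =>
    rw [List.cons_append, countXY_cons, countXY_cons, Nat.add_assoc]
    have h1 : (if [false, true] <+: a :: u then 1 else 0) ≤
        (if [false, true] <+: a :: u ++ v then 1 else 0) := by
      by_cases h : [false, true] <+: a :: u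
      · rw [if_pos h, if_pos (h.trans (List.prefix_append _ _))]
      · rw [if_neg h]; exact Nat.zero_le _
    have := Nat.add_le_add h1 ih
    rwa [List.cons_append] at this

lemma one_le_countXY {t : List Bool} (h : [false, true] <:+: t) : 1 ≤ countXY t := by
  induction t with
  | nil => simp at h
  | cons a l ih =>
    rw [countXY_cons]
    rcases List.infix_cons_iff.mp h with h' | h'
    · rw [if_pos h']; omega
    · have := ih h'; omega

lemma no_xy_structure {t : List Bool} (h : ¬ [false, true] <:+: t) :
    ∃ a b, t = List.replicate a true ++ List.replicate b false := by
  induction t with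
  | nil => exact ⟨0, 0, rfl⟩
  | cons c l ih =>
    obtain ⟨a, b, hab⟩ := ih (fun h' => h (h'.trans (List.suffix_cons c l).isInfix))
    cases c with
    | true =>
      exact ⟨a + 1, b, by rw [hab, List.replicate_succ, List.cons_append]⟩
    | false =>
      refine ⟨0, b + 1, ?_⟩
      rcases Nat.eq_zero_or_pos a with ha | ha
      · subst ha; simp at hab; rw [hab]; simp [List.replicate_succ]
      · exfalso; apply h
        obtain ⟨a', rfl⟩ := Nat.exists_eq_add_of_lt ha
        rw [hab]
        simp only [Nat.zero_add, List.replicate_succ, List.cons_append]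
        exact List.IsPrefix.isInfix ⟨List.replicate a' true ++ List.replicate b false, rfl⟩

lemma replicate_prefix {x : Bool} {p a : ℕ} (h : p ≤ a) :
    List.replicate p x <+: List.replicate a x :=
  ⟨List.replicate (a - p) x, by rw [← List.replicate_add]; congr 1; omega⟩

lemma replicate_suffix {x : Bool} {p a : ℕ} (h : p ≤ a) :
    List.replicate p x <:+ List.replicate a x :=
  ⟨List.replicate (a - p) x, by rw [← List.replicate_add]; congr 1; omega⟩

lemma block_has_xy {p : ℕ} (hp : 1 ≤ p) {t : List Bool}
    (hx : ¬ (List.replicate p false) <:+: t) (hy : ¬ (List.replicate p true) <:+: t)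
    (hlen : t.length = 2 * p - 1) : [false, true] <:+: t := by
  by_contra h
  obtain ⟨a, b, rfl⟩ := no_xy_structure h
  have ha : a < p := by
    by_contra ha
    exact hy (((replicate_prefix (by omega)).trans (List.prefix_append _ _)).isInfix)
  have hb : b < p := by
    by_contra hb
    exact hx (((replicate_suffix (by omega)).trans (List.suffix_append _ _)).isInfix)
  simp [List.length_append] at hlen
  omega


/-- If a word `w` over the two-letter alphabet `{x,y}` (encoded `false`, `true`) has no
factor `x^p` and no factor `y^p`, then every factor of `w` of length `(2p−1)·m` contains
at least `m` occurrences of `xy`. -/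
theorem syndetic_factor_xy_count (p : ℕ) (hp : 1 ≤ p) (w : List Bool)
    (hx : ¬ (List.replicate p false) <:+: w) (hy : ¬ (List.replicate p true) <:+: w)
    (m : ℕ) (hm : 1 ≤ m) (s : List Bool) (hs : s <:+: w)
    (hlen : s.length = (2 * p - 1) * m) :
    m ≤ countXY s := by
  clear hm
  induction m generalizing s with
  | zero => exact Nat.zero_le _
  | succ m ih =>
    set q := 2 * p - 1 with hq
    have hqs : q ≤ s.length := by
      rw [hlen, Nat.mul_succ]; omega
    have hu_len : (s.take q).length = q := by rw [List.length_take]; omega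
    have huinf : s.take q <:+: w := (List.take_prefix q s).isInfix.trans hs
    have h1 : 1 ≤ countXY (s.take q) :=
      one_le_countXY (block_has_xy hp (fun h => hx (h.trans huinf))
        (fun h => hy (h.trans huinf)) hu_len)
    have hv : m ≤ countXY (s.drop q) := by
      rcases Nat.eq_zero_or_pos m with rfl | hm'
      · exact Nat.zero_le _
      · exact ih _ ((List.drop_suffix q s).isInfix.trans hs)
          (by rw [List.length_drop, hlen, Nat.mul_succ]; omega)
    calc m + 1 ≤ countXY (s.take q) + countXY (s.drop q) := by omega
      _ ≤ countXY (s.take q ++ s.drop q) := countXY_append _ _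
      _ = countXY s := by rw [List.take_append_drop]
end
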